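/- arXiv:1402.5922 — 4 statements merged into one kernel-verified Lean document; each statement's English description precedes it below -/
import Mathlib

section
/- (Beck-Chevalley for exact squares) Consider monotone maps α : E → X, β : E → Y, f : X → Z, g : Y → Z between posets with f ∘ α ≤ g ∘ β pointwise. The square is exact (meaning: whenever f(x) ≤ g(y) there exists w ∈ E with x ≤ α(w) and β(w) ≤ y) if and only if for every monotone h : X → 2 the equality ∃_β([α,2](h)) = [g,2](∃_f(h)) holds, i.e., for all y ∈ Y: (∃ w ∈ E, h(α(w)) = 1 ∧ β(w) ≤ y) ⟺ (∃ x ∈ X, h(x) = 1 ∧ f(x) ≤ g(y)). -/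
theorem exact_iff_beckChevalley {E X Y Z : Type*}
    [PartialOrder E] [PartialOrder X] [PartialOrder Y] [PartialOrder Z]
    (α : E → X) (β : E → Y) (f : X → Z) (g : Y → Z)
    (hα : Monotone α) (hβ : Monotone β) (hf : Monotone f) (hg : Monotone g)
    (hlax : ∀ w, f (α w) ≤ g (β w)) :
    (∀ x y, f x ≤ g y → ∃ w, x ≤ α w ∧ β w ≤ y) ↔
      (∀ h : X → Prop, Monotone h →
        ∀ y, (∃ w, h (α w) ∧ β w ≤ y) ↔ (∃ x, h x ∧ f x ≤ g y)) := by
  constructor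
  · intro hex h hh y
    constructor
    · rintro ⟨w, hw, hwy⟩
      exact ⟨α w, hw, le_trans (hlax w) (hg hwy)⟩
    · rintro ⟨x, hx, hxy⟩
      obtain ⟨w, hw1, hw2⟩ := hex x y hxy
      exact ⟨w, hh hw1 hx, hw2⟩
  · intro hbc x y hxy
    have := (hbc (fun x' => x ≤ x') (fun _ _ hab h => le_trans h hab) y).mpr
      ⟨x, le_refl x, hxy⟩
    exact this
end

section
/- A convex-set version of exactness for powersets: let f : X → Z and g : Y → Z be monotone maps of posets and suppose the maps are part of an exact square with apex E = {(x,y) | f(x) ≤ g(y)}. Then for any subsets U ⊆ X, V ⊆ Y with (f[U], g[V]) related in the Egli-Milner preorder on subsets of Z, there exists a subset W ⊆ E whose first-projection image W₁ ⊆ X satisfies U Egli-Milner-below W₁ (∀ u ∈ U ∃ w ∈ W₁, u ≤ w and ∀ w ∈ W₁ ∃ u ∈ U, u ≤ w) and whose second-projection image W₂ ⊆ Y satisfies W₂ Egli-Milner-below V. In other words, the convex powerset functor preserves the exact square (E, π₁, π₂, f, g). -/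
/-- The Egli-Milner relation on subsets of a poset. -/
def EM {P : Type*} [PartialOrder P] (A B : Set P) : Prop :=
  (∀ a ∈ A, ∃ b ∈ B, a ≤ b) ∧ (∀ b ∈ B, ∃ a ∈ A, a ≤ b)

theorem convex_powerset_preserves_exact_square {X Y Z : Type*}
    [PartialOrder X] [PartialOrder Y] [PartialOrder Z]
    (f : X → Z) (g : Y → Z) (hf : Monotone f) (hg : Monotone g)
    (U : Set X) (V : Set Y) (h : EM (f '' U) (g '' V)) :
    ∃ W : Set (X × Y), (∀ p ∈ W, f p.1 ≤ g p.2) ∧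
      EM U (Prod.fst '' W) ∧ EM (Prod.snd '' W) V := by
  refine ⟨{p | p.1 ∈ U ∧ p.2 ∈ V ∧ f p.1 ≤ g p.2}, fun p hp => hp.2.2, ⟨?_, ?_⟩, ?_, ?_⟩
  · intro u hu
    obtain ⟨z, ⟨v, hv, rfl⟩, hz⟩ := h.1 (f u) ⟨u, hu, rfl⟩
    exact ⟨u, ⟨(u, v), ⟨hu, hv, hz⟩, rfl⟩, le_refl u⟩
  · rintro b ⟨p, hp, rfl⟩
    exact ⟨p.1, hp.1, le_refl _⟩
  · rintro a ⟨p, hp, rfl⟩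
    exact ⟨p.2, hp.2.1, le_refl _⟩
  · intro v hv
    obtain ⟨z, ⟨u, hu, rfl⟩, hz⟩ := h.2 (g v) ⟨v, hv, rfl⟩
    exact ⟨v, ⟨(u, v), ⟨hu, hv, hz⟩, rfl⟩, le_refl v⟩
end

section
/- Every surjective monotone map c : X → Y between posets is the coinserter of its comma pair: letting P = {(x,x') ∈ X × X | c(x) ≤ c(x')} with componentwise order and projections d⁰, d¹ : P → X, we have c∘d⁰ ≤ c∘d¹, and for every monotone h : X → W with h∘d⁰ ≤ h∘d¹ there is a unique monotone k : Y → W with k∘c = h; moreover h ≤ h' implies k ≤ k' for the induced maps. -/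
theorem surjection_is_coinserter_of_comma_pair {X Y W : Type*}
    [PartialOrder X] [PartialOrder Y] [PartialOrder W]
    (c : X → Y) (hc : Monotone c) (hsurj : Function.Surjective c) :
    (∀ p : {p : X × X // c p.1 ≤ c p.2}, c p.1.1 ≤ c p.1.2) ∧
    (∀ h : X → W, Monotone h → (∀ x x', c x ≤ c x' → h x ≤ h x') →
      ∃! k : Y → W, Monotone k ∧ k ∘ c = h) ∧
    (∀ h h' : X → W, Monotone h → Monotone h' →
      (∀ x x', c x ≤ c x' → h x ≤ h x') →
      (∀ x x', c x ≤ c x' → h' x ≤ h' x') →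
      (∀ x, h x ≤ h' x) →
      ∀ k k' : Y → W, Monotone k → Monotone k' → k ∘ c = h → k' ∘ c = h' →
        ∀ y, k y ≤ k' y) := by
  refine ⟨fun p => p.2, fun h hm hco => ?_, ?_⟩
  · choose s hs using hsurj
    refine ⟨fun y => h (s y), ⟨?_, ?_⟩, ?_⟩
    · intro y y' hy
      exact hco _ _ (by rw [hs, hs]; exact hy)
    · funext x
      exact le_antisymm (hco _ _ (by rw [hs])) (hco _ _ (by rw [hs]))
    · intro k ⟨hk, hkc⟩
      funext y
      have := congrFun hkc (s y)
      simp only [Function.comp_apply, hs] at this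
      simp [this]
  · intro h h' hm hm' _ _ hle k k' _ _ hkc hk'c y
    obtain ⟨x, rfl⟩ := hsurj y
    calc k (c x) = h x := congrFun hkc x
    _ ≤ h' x := hle x
    _ = k' (c x) := (congrFun hk'c x).symm
end

section
/- In a poset-enriched category, consider a 3×3 diagram in which the first two rows and the first two columns are coinserters and the evident squares commute (b_i ∘ f_j = g_j ∘ a_i for i,j ∈ {1,2}). Let h₃ be the coinserter of the induced pair h₁, h₂. Then the induced arrow c₃ : Y₃ → Z₃ makes the third column a coinserter. (3×3 lemma for coinserters, first part.) -/
open CategoryTheory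

/-- The (1- and 2-dimensional) universal property of a coinserter in a
Pos-enriched category. -/
def IsCoinserter {C : Type*} [Category C] [∀ X Y : C, PartialOrder (X ⟶ Y)]
    {A B Q : C} (d0 d1 : A ⟶ B) (c : B ⟶ Q) : Prop :=
  d0 ≫ c ≤ d1 ≫ c ∧
  (∀ {D : C} (q : B ⟶ D), d0 ≫ q ≤ d1 ≫ q → ∃! h : Q ⟶ D, c ≫ h = q) ∧
  (∀ {D : C} (q q' : B ⟶ D) (h h' : Q ⟶ D), d0 ≫ q ≤ d1 ≫ q →
    d0 ≫ q' ≤ d1 ≫ q' → c ≫ h = q → c ≫ h' = q' → q ≤ q' → h ≤ h')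

theorem three_by_three_coinserter {C : Type*} [Category C]
    [∀ X Y : C, PartialOrder (X ⟶ Y)]
    (hcomp : ∀ {X Y Z : C} (f f' : X ⟶ Y) (g g' : Y ⟶ Z),
      f ≤ f' → g ≤ g' → f ≫ g ≤ f' ≫ g')
    {X₁ X₂ X₃ Y₁ Y₂ Y₃ Z₁ Z₂ Z₃ : C}
    (f₁ f₂ : X₁ ⟶ X₂) (f₃ : X₂ ⟶ X₃)
    (g₁ g₂ : Y₁ ⟶ Y₂) (g₃ : Y₂ ⟶ Y₃)
    (a₁ a₂ : X₁ ⟶ Y₁) (a₃ : Y₁ ⟶ Z₁)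
    (b₁ b₂ : X₂ ⟶ Y₂) (b₃ : Y₂ ⟶ Z₂)
    (h₁ h₂ : Z₁ ⟶ Z₂) (h₃ : Z₂ ⟶ Z₃)
    (c₁ c₂ : X₃ ⟶ Y₃) (c₃ : Y₃ ⟶ Z₃)
    (hsq11 : f₁ ≫ b₁ = a₁ ≫ g₁) (hsq12 : f₂ ≫ b₁ = a₁ ≫ g₂)
    (hsq21 : f₁ ≫ b₂ = a₂ ≫ g₁) (hsq22 : f₂ ≫ b₂ = a₂ ≫ g₂)
    (hrow1 : IsCoinserter f₁ f₂ f₃) (hrow2 : IsCoinserter g₁ g₂ g₃)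
    (hcol1 : IsCoinserter a₁ a₂ a₃) (hcol2 : IsCoinserter b₁ b₂ b₃)
    (hrow3 : IsCoinserter h₁ h₂ h₃)
    (hc₁ : f₃ ≫ c₁ = b₁ ≫ g₃) (hc₂ : f₃ ≫ c₂ = b₂ ≫ g₃)
    (hh₁ : a₃ ≫ h₁ = g₁ ≫ b₃) (hh₂ : a₃ ≫ h₂ = g₂ ≫ b₃)
    (hc₃ : g₃ ≫ c₃ = b₃ ≫ h₃) :
    IsCoinserter c₁ c₂ c₃ := by
  obtain ⟨h1le, h1ex, h1two⟩ := hrow1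
  obtain ⟨h2le, h2ex, h2two⟩ := hrow2
  obtain ⟨v1le, v1ex, v1two⟩ := hcol1
  obtain ⟨v2le, v2ex, v2two⟩ := hcol2
  obtain ⟨h3le, h3ex, h3two⟩ := hrow3
  have hb : ∀ {D : C} (q : Y₃ ⟶ D), c₁ ≫ q ≤ c₂ ≫ q →
      b₁ ≫ g₃ ≫ q ≤ b₂ ≫ g₃ ≫ q := by
    intro D q hq
    rw [← reassoc_of% hc₁, ← reassoc_of% hc₂]
    exact hcomp _ _ _ _ le_rfl hq
  have hgle : ∀ {D : C} (q q' : Y₃ ⟶ D), q ≤ q' →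
      g₁ ≫ g₃ ≫ q ≤ g₂ ≫ g₃ ≫ q' := by
    intro D q q' h
    simpa only [Category.assoc] using hcomp (g₁ ≫ g₃) (g₂ ≫ g₃) q q' h2le h
  have key : ∀ {D : C} (q : Y₃ ⟶ D), c₁ ≫ q ≤ c₂ ≫ q → ∀ k : Z₂ ⟶ D,
      b₃ ≫ k = g₃ ≫ q → h₁ ≫ k ≤ h₂ ≫ k := by
    intro D q hq k hk
    refine v1two (g₁ ≫ g₃ ≫ q) (g₂ ≫ g₃ ≫ q) (h₁ ≫ k) (h₂ ≫ k) ?_ ?_ ?_ ?_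
      (hgle q q le_rfl)
    · rw [← reassoc_of% hsq11, ← reassoc_of% hsq21, ← reassoc_of% hc₁,
        ← reassoc_of% hc₂]
      exact hcomp _ _ _ _ le_rfl (hcomp _ _ _ _ le_rfl hq)
    · rw [← reassoc_of% hsq12, ← reassoc_of% hsq22, ← reassoc_of% hc₁,
        ← reassoc_of% hc₂]
      exact hcomp _ _ _ _ le_rfl (hcomp _ _ _ _ le_rfl hq)
    · rw [reassoc_of% hh₁, hk]
    · rw [reassoc_of% hh₂, hk]
  refine ⟨?_, ?_, ?_⟩
  · -- 1-dimensional inequality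
    have e1 : f₃ ≫ c₁ ≫ c₃ = b₁ ≫ b₃ ≫ h₃ := by
      rw [reassoc_of% hc₁, hc₃]
    have e2 : f₃ ≫ c₂ ≫ c₃ = b₂ ≫ b₃ ≫ h₃ := by
      rw [reassoc_of% hc₂, hc₃]
    refine h1two (b₁ ≫ b₃ ≫ h₃) (b₂ ≫ b₃ ≫ h₃) (c₁ ≫ c₃) (c₂ ≫ c₃) ?_ ?_ e1 e2 ?_
    · rw [reassoc_of% hsq11, reassoc_of% hsq12, ← reassoc_of% hh₁, ← reassoc_of% hh₂]
      exact hcomp _ _ _ _ le_rfl (hcomp _ _ _ _ le_rfl h3le)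
    · rw [reassoc_of% hsq21, reassoc_of% hsq22, ← reassoc_of% hh₁, ← reassoc_of% hh₂]
      exact hcomp _ _ _ _ le_rfl (hcomp _ _ _ _ le_rfl h3le)
    · simpa only [Category.assoc] using hcomp (b₁ ≫ b₃) (b₂ ≫ b₃) h₃ h₃ v2le le_rfl
  · -- 1-dimensional universal property
    intro D q hq
    obtain ⟨k, hk, hkuniq⟩ := v2ex (g₃ ≫ q) (hb q hq)
    obtain ⟨u, hu, huuniq⟩ := h3ex k (key q hq k hk)
    have hcu : c₃ ≫ u = q := by
      obtain ⟨w, hw, hwuniq⟩ := h2ex (g₃ ≫ q) (hgle q q le_rfl)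
      have e : g₃ ≫ c₃ ≫ u = g₃ ≫ q := by rw [reassoc_of% hc₃, hu, hk]
      exact (hwuniq _ e).trans (hwuniq _ rfl).symm
    refine ⟨u, hcu, ?_⟩
    intro v hv
    exact huuniq v (hkuniq (h₃ ≫ v) (by show b₃ ≫ h₃ ≫ v = g₃ ≫ q; rw [← reassoc_of% hc₃, hv]))
  · -- 2-dimensional universal property
    intro D q q' u u' hq hq' hu hu' hle
    have hk : b₃ ≫ h₃ ≫ u = g₃ ≫ q := by rw [← reassoc_of% hc₃, hu]
    have hk' : b₃ ≫ h₃ ≫ u' = g₃ ≫ q' := by rw [← reassoc_of% hc₃, hu']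
    refine h3two (h₃ ≫ u) (h₃ ≫ u') u u' (key q hq _ hk) (key q' hq' _ hk') rfl rfl ?_
    exact v2two (g₃ ≫ q) (g₃ ≫ q') (h₃ ≫ u) (h₃ ≫ u') (hb q hq) (hb q' hq') hk hk'
      (hcomp _ _ _ _ le_rfl hle)
end
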